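/- arXiv:0905.1423 — 5 statements merged into one kernel-verified Lean document; each statement's English description precedes it below -/
import Mathlib

section
/- Let A be a commutative ring, d a positive integer, and B a commutative A-algebra which is finite locally free of rank d as an A-module. Let I be the kernel of the canonical A-linear map π : B^{⊗d} → ⋀^d_A B. Then I is stable under multiplication by S_d-invariant elements: for every s ∈ S^d_A(B) and every x ∈ I one has s·x ∈ I. Consequently, multiplication in B^{⊗d} induces an S^d_A(B)-module structure on ⋀^d_A B for which π is S^d_A(B)-linear. -/
/-!
Let `τ = swap i j`. For a `τ`-invariant tensor `t`, the relation `π (τ t) = -π t` only gives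
`2 • π t = 0`, so one works with coordinates instead. Realise the finite projective module `M` as
a retract of `Rⁿ`; the coordinates `c K` of `t` in the tensor basis of `(Rⁿ)^{⊗d}` then satisfy
`c (K ∘ τ) = c K`, so under any alternating map the terms `K` and `K ∘ τ` cancel in pairs and
the terms with `K ∘ τ = K` vanish because they have two equal entries.

If `s` is symmetric and `b i = b j`, then `s * ⨂ b` is `τ`-invariant, so `b ↦ π (s * ⨂ b)` is
alternating and factors as `L ∘ ιMulti` for a linear `L : ⋀^d B → ⋀^d B`; hence
`π (s * x) = L (π x)` for all `x`.
-/

open scoped TensorProduct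

/-- The canonical `A`-linear map `B^{⊗d} → ⋀^d_A B` sending `b₁ ⊗ ⋯ ⊗ b_d` to
`b₁ ∧ ⋯ ∧ b_d`. -/
noncomputable def tensorPowerToExteriorPower (A : Type*) [CommRing A] (B : Type*) [CommRing B]
    [Algebra A B] (d : ℕ) : (⨂[A] (_ : Fin d), B) →ₗ[A] ⋀[A]^d B :=
  PiTensorProduct.lift
    (((ExteriorAlgebra.ιMulti A d (M := B)).codRestrict (⋀[A]^d B)
      (fun v => ExteriorAlgebra.ιMulti_range A d (Set.mem_range_self v))).toMultilinearMap)

open Module PiTensorProduct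

section

variable {R M N : Type*} [CommSemiring R] [AddCommMonoid M] [Module R M]
  [AddCommMonoid N] [Module R N] {n : ℕ}

theorem Basis.piTensorProduct_repr_reindex_apply {ι : Type*} [Fintype ι] (b : Basis ι R M)
    (σ : Equiv.Perm (Fin n)) (t : ⨂[R] _ : Fin n, M) (K : Fin n → ι) :
    (Basis.piTensorProduct fun _ => b).repr (reindex R (fun _ => M) σ t) K =
      (Basis.piTensorProduct fun _ => b).repr t (K ∘ σ) := by
  induction t using PiTensorProduct.induction_on with
  | smul_tprod r v =>
    simp only [map_smul, reindex_tprod, Finsupp.smul_apply,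
      Basis.piTensorProduct_repr_tprod_apply, Function.comp_apply]
    congr 1
    exact Fintype.prod_equiv σ.symm _ _ fun l => by simp
  | add x y hx hy => simp only [map_add, Finsupp.add_apply, hx, hy]

namespace PiTensorProduct

theorem lift_eq_zero_of_reindex_swap_eq_self_of_basis {ι : Type*} [Fintype ι]
    (b : Basis ι R M) (f : M [⋀^Fin n]→ₗ[R] N) {i j : Fin n} (hij : i ≠ j)
    {t : ⨂[R] _ : Fin n, M} (ht : reindex R (fun _ => M) (Equiv.swap i j) t = t) :
    lift f.toMultilinearMap t = 0 := by
  set c := (Basis.piTensorProduct fun _ => b).repr t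
  have hc : ∀ K, c (K ∘ Equiv.swap i j) = c K := fun K => by
    rw [← Basis.piTensorProduct_repr_reindex_apply, ht]
  rw [← (Basis.piTensorProduct fun _ => b).sum_repr t, map_sum]
  simp only [map_smul, Basis.piTensorProduct_apply, lift.tprod, AlternatingMap.coe_multilinearMap]
  refine Finset.sum_ninvolution (· ∘ Equiv.swap i j) (fun K => ?_) (fun K hne => ?_)
    (fun _ => Finset.mem_univ _) (fun K => by ext; simp)
  · rw [hc, ← smul_add]
    exact (congr_arg (c K • ·) (f.map_add_swap (b ∘ K) hij)).trans (smul_zero _)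
  · refine fun hfix => hne ?_
    have hKij : K i = K j := by simpa using congr_fun hfix j
    exact (congr_arg (c K • ·) (f.map_eq_zero_of_eq (b ∘ K) (congr_arg b hKij) hij)).trans
      (smul_zero _)

theorem lift_eq_zero_of_reindex_swap_eq_self [Module.Finite R M] [Module.Projective R M]
    (f : M [⋀^Fin n]→ₗ[R] N) {i j : Fin n} (hij : i ≠ j)
    {t : ⨂[R] _ : Fin n, M} (ht : reindex R (fun _ => M) (Equiv.swap i j) t = t) :
    lift f.toMultilinearMap t = 0 := by
  obtain ⟨m, p, g, -, -, hpg⟩ := Module.Finite.exists_comp_eq_id_of_projective R M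
  have hmap : map (fun _ => p) (map (fun _ => g) t) = t := by
    rw [← LinearMap.comp_apply, ← map_comp, hpg, map_id, LinearMap.id_apply]
  have hswap : reindex R _ (Equiv.swap i j) (map (fun _ => g) t) = map (fun _ => g) t := by
    rw [← map_reindex, ht]
  rw [← hmap, ← LinearMap.comp_apply, lift_comp_map]
  exact lift_eq_zero_of_reindex_swap_eq_self_of_basis (Pi.basisFun R (Fin m))
    (f.compLinearMap p) hij hswap

theorem reindex_mul {ι ι₂ : Type*} {A : ι → Type*} [∀ i, Semiring (A i)] [∀ i, Algebra R (A i)]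
    (e : ι ≃ ι₂) (x y : ⨂[R] i, A i) :
    reindex R A e (x * y) = reindex R A e x * reindex R A e y := by
  induction x using PiTensorProduct.induction_on with
  | smul_tprod r v =>
    induction y using PiTensorProduct.induction_on with
    | smul_tprod r' w => simp [Pi.mul_def]
    | add y y' hy hy' => simp only [mul_add, map_add, hy, hy']
  | add x x' hx hx' => simp only [add_mul, map_add, hx, hx']

end PiTensorProduct

end

section

variable {A B N : Type*} [CommSemiring A] [Semiring B] [Algebra A B] [Module.Finite A B]
  [Module.Projective A B] [AddCommMonoid N] [Module A N] {d : ℕ}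

noncomputable def AlternatingMap.mulLeftOfSymmetric (f : B [⋀^Fin d]→ₗ[A] N)
    (s : ⨂[A] _ : Fin d, B) (hs : ∀ σ : Equiv.Perm (Fin d), reindex A (fun _ => B) σ s = s) :
    B [⋀^Fin d]→ₗ[A] N where
  toMultilinearMap :=
    (lift f.toMultilinearMap ∘ₗ LinearMap.mulLeft A s).compMultilinearMap (tprod A)
  map_eq_zero_of_eq' b i j hb hij := by
    refine lift_eq_zero_of_reindex_swap_eq_self f hij ?_
    have hb_swap : b ∘ Equiv.swap i j = b := by
      simp [Equiv.comp_swap_eq_update, hb]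
    rw [LinearMap.mulLeft_apply, reindex_mul, hs, reindex_tprod, Equiv.symm_swap]
    exact congr_arg (s * PiTensorProduct.tprod A ·) hb_swap

theorem AlternatingMap.mulLeftOfSymmetric_apply (f : B [⋀^Fin d]→ₗ[A] N)
    (s : ⨂[A] _ : Fin d, B) (hs : ∀ σ : Equiv.Perm (Fin d), reindex A (fun _ => B) σ s = s)
    (b : Fin d → B) :
    f.mulLeftOfSymmetric s hs b = lift f.toMultilinearMap (s * PiTensorProduct.tprod A b) :=
  rfl

end

theorem tensorPowerToExteriorPower_eq_lift (A B : Type*) [CommRing A] [CommRing B] [Algebra A B]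
    (d : ℕ) :
    tensorPowerToExteriorPower A B d = lift (exteriorPower.ιMulti A d).toMultilinearMap :=
  rfl

theorem exists_tensorPowerToExteriorPower_comp_mulLeft {A B : Type*} [CommRing A] [CommRing B]
    [Algebra A B] [Module.Finite A B] [Module.Projective A B] {d : ℕ}
    (s : ⨂[A] _ : Fin d, B) (hs : ∀ σ : Equiv.Perm (Fin d), reindex A (fun _ => B) σ s = s) :
    ∃ L : ⋀[A]^d B →ₗ[A] ⋀[A]^d B,
      tensorPowerToExteriorPower A B d ∘ₗ LinearMap.mulLeft A s =
        L ∘ₗ tensorPowerToExteriorPower A B d := by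
  refine ⟨exteriorPower.alternatingMapLinearEquiv
    ((exteriorPower.ιMulti A d).mulLeftOfSymmetric s hs), ?_⟩
  refine PiTensorProduct.ext (MultilinearMap.ext fun b => ?_)
  simp only [tensorPowerToExteriorPower_eq_lift, LinearMap.compMultilinearMap_apply,
    LinearMap.comp_apply, LinearMap.mulLeft_apply, lift.tprod, AlternatingMap.coe_multilinearMap,
    exteriorPower.alternatingMapLinearEquiv_apply_ιMulti, AlternatingMap.mulLeftOfSymmetric_apply]

theorem ker_tensorPowerToExteriorPower_stable_under_invariants_general
    (A : Type) [CommRing A] (d : ℕ)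
    (B : Type) [CommRing B] [Algebra A B] [Module.Finite A B] [Module.Projective A B]
    (s : ⨂[A] (_ : Fin d), B)
    (hs : ∀ σ : Equiv.Perm (Fin d), PiTensorProduct.reindex A (fun _ : Fin d => B) σ s = s) :
    (∀ x, x ∈ LinearMap.ker (tensorPowerToExteriorPower A B d) →
      s * x ∈ LinearMap.ker (tensorPowerToExteriorPower A B d)) ∧
    (∀ x y, tensorPowerToExteriorPower A B d x = tensorPowerToExteriorPower A B d y →
      tensorPowerToExteriorPower A B d (s * x) = tensorPowerToExteriorPower A B d (s * y)) := by
  obtain ⟨L, hL⟩ := exists_tensorPowerToExteriorPower_comp_mulLeft s hs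
  have hπ : ∀ x, tensorPowerToExteriorPower A B d (s * x) =
      L (tensorPowerToExteriorPower A B d x) := LinearMap.congr_fun hL
  refine ⟨fun x hx => ?_, fun x y hxy => ?_⟩
  · rw [LinearMap.mem_ker] at hx ⊢
    rw [hπ, hx, map_zero]
  · rw [hπ, hπ, hxy]

/-- Let `A` be a commutative ring, `d` a positive integer, and `B` a commutative
`A`-algebra which is finite locally free of rank `d` as an `A`-module. Let `I` be the kernel of
the canonical `A`-linear map `π : B^{⊗d} → ⋀^d_A B`. Then `I` is stable under multiplication by
`S_d`-invariant elements; consequently multiplication in `B^{⊗d}` induces an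
`S^d_A(B)`-module structure on `⋀^d_A B` for which `π` is `S^d_A(B)`-linear. -/
theorem ker_tensorPowerToExteriorPower_stable_under_invariants
    (A : Type) [CommRing A] (d : ℕ) (hd : 0 < d)
    (B : Type) [CommRing B] [Algebra A B] [Module.Finite A B] [Module.Projective A B]
    (hrank : ∀ p : PrimeSpectrum A, Module.rankAtStalk B p = d)
    (s : ⨂[A] (_ : Fin d), B)
    (hs : ∀ σ : Equiv.Perm (Fin d), PiTensorProduct.reindex A (fun _ : Fin d => B) σ s = s) :
    (∀ x, x ∈ LinearMap.ker (tensorPowerToExteriorPower A B d) →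
      s * x ∈ LinearMap.ker (tensorPowerToExteriorPower A B d)) ∧
    (∀ x y, tensorPowerToExteriorPower A B d x = tensorPowerToExteriorPower A B d y →
      tensorPowerToExteriorPower A B d (s * x) = tensorPowerToExteriorPower A B d (s * y)) :=
  ker_tensorPowerToExteriorPower_stable_under_invariants_general A d B s hs
end

section
/- Let A be a commutative ring, d a positive integer, B a commutative A-algebra finite locally free of rank d as an A-module, f : A → A' a homomorphism of commutative rings, and B' = A' ⊗_A B (a commutative A'-algebra which is finite locally free of rank d as an A'-module). The canonical base-change A-algebra homomorphism c : B^{⊗d} → (B')^{⊗d} is S_d-equivariant, hence carries S^d_A(B) into S^d_{A'}(B'), and the norm homomorphisms satisfy φ_{B'/A'}(c(s)) = f(φ_{B/A}(s)) for every s ∈ S^d_A(B). -/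
open scoped TensorProduct
open PiTensorProduct

namespace AlternatingMap

variable (R : Type*) {S : Type*} [Semiring R] [Semiring S] [SMul R S]
  {M : Type*} [AddCommMonoid M] [Module R M] [Module S M] [IsScalarTower R S M]
  {N : Type*} [AddCommMonoid N] [Module R N] [Module S N] [IsScalarTower R S N] {ι : Type*}

def restrictScalars (f : M [⋀^ι]→ₗ[S] N) : M [⋀^ι]→ₗ[R] N where
  toMultilinearMap := f.toMultilinearMap.restrictScalars R
  map_eq_zero_of_eq' := f.map_eq_zero_of_eq'

@[simp]
theorem coe_restrictScalars (f : M [⋀^ι]→ₗ[S] N) : ⇑(f.restrictScalars R) = f :=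
  rfl

end AlternatingMap

theorem IsLocalizedModule.exists_alternatingMap_isUnit {R : Type*} [CommRing R]
    (S : Submonoid R) {Rₛ : Type*} [CommRing Rₛ] [Algebra R Rₛ] [IsLocalization S Rₛ]
    {N Nₛ : Type*} [AddCommGroup N] [Module R N] [AddCommGroup Nₛ] [Module R Nₛ]
    [Module Rₛ Nₛ] [IsScalarTower R Rₛ Nₛ] (g : N →ₗ[R] Nₛ) [IsLocalizedModule S g]
    {ι : Type*} [Fintype ι] [DecidableEq ι] (b : Module.Basis ι Rₛ Nₛ) :
    ∃ (f : N [⋀^ι]→ₗ[R] Rₛ) (v : ι → N), IsUnit (f v) := by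
  choose w hw using fun i => IsLocalizedModule.surj S g (b i)
  have hunit (i : ι) : IsUnit (algebraMap R Rₛ (w i).2) := IsLocalization.map_units Rₛ (w i).2
  refine ⟨(b.det.restrictScalars R).compLinearMap g, fun i => (w i).1, ?_⟩
  have hgw : (fun i => g (w i).1) = b.isUnitSMul hunit := by
    ext i
    rw [Module.Basis.isUnitSMul_apply, ← hw i, algebraMap_smul]
    rfl
  have hdet : (b.det.restrictScalars R).compLinearMap g (fun i => (w i).1) =
      b.det (b.isUnitSMul hunit) := by
    rw [AlternatingMap.compLinearMap_apply, AlternatingMap.coe_restrictScalars, ← hgw]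
  exact hdet ▸ b.isUnit_det _

namespace exteriorPower

theorem faithfulSMul_of_rankAtStalk_eq {R N : Type*} [CommRing R] [AddCommGroup N]
    [Module R N] [Module.Finite R N] [Module.Projective R N] {d : ℕ}
    (hrank : ∀ p : PrimeSpectrum R, Module.rankAtStalk N p = d) :
    FaithfulSMul R (⋀[R]^d N) := by
  refine ⟨fun {r₁ r₂} h => sub_eq_zero.mp (eq_zero_of_localization _ fun J hJ => ?_)⟩
  let Nⱼ := LocalizedModule J.primeCompl N
  have : Module.Finite (Localization.AtPrime J) Nⱼ :=
    Module.Finite.of_isLocalizedModule J.primeCompl (LocalizedModule.mkLinearMap J.primeCompl N)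
  have : Module.Projective (Localization.AtPrime J) Nⱼ :=
    Module.projective_of_isLocalizedModule J.primeCompl (LocalizedModule.mkLinearMap J.primeCompl N)
  have : Module.Free (Localization.AtPrime J) Nⱼ := Module.free_of_flat_of_isLocalRing
  obtain ⟨f, v, hunit⟩ := IsLocalizedModule.exists_alternatingMap_isUnit J.primeCompl
    (LocalizedModule.mkLinearMap J.primeCompl N)
    (Module.finBasisOfFinrankEq _ Nⱼ (hrank ⟨J, hJ.isPrime⟩))
  have hsmul : (r₁ - r₂) • f v = 0 := by
    have := congrArg (alternatingMapLinearEquiv f) (h (ιMulti R d v))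
    rwa [map_smul, map_smul, alternatingMapLinearEquiv_apply_ιMulti, ← sub_eq_zero, ← sub_smul]
      at this
  rw [Algebra.smul_def] at hsmul
  exact hunit.mul_left_eq_zero.mp hsmul

variable (A A' : Type*) [CommRing A] [CommRing A'] [Algebra A A']
  (M : Type*) [AddCommGroup M] [Module A M] (n : ℕ)

noncomputable def toBaseChange : ⋀[A]^n M →ₗ[A] ⋀[A']^n (A' ⊗[A] M) :=
  alternatingMapLinearEquiv (((ιMulti A' n).restrictScalars A).compLinearMap
    (TensorProduct.mk A A' M 1))

variable {A A' M n}

@[simp]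
theorem toBaseChange_ιMulti (m : Fin n → M) :
    toBaseChange A A' M n (ιMulti A n m) = ιMulti A' n (fun i => 1 ⊗ₜ m i) :=
  alternatingMapLinearEquiv_apply_ιMulti _ m

theorem linearMap_ext_baseChange {P : Type*} [AddCommGroup P] [Module A' P]
    {f g : ⋀[A']^n (A' ⊗[A] M) →ₗ[A'] P}
    (h : ∀ m : Fin n → M,
      f (ιMulti A' n (fun i => 1 ⊗ₜ m i)) = g (ιMulti A' n (fun i => 1 ⊗ₜ m i))) :
    f = g := by
  have hspan : Submodule.span A' (TensorProduct.mk A A' M 1 '' Set.univ) = ⊤ := by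
    rw [← Submodule.baseChange_span, Submodule.span_univ, Submodule.baseChange_top]
  refine LinearMap.ext_on (ιMulti_span_of_span A' n _ hspan) ?_
  rintro _ ⟨v, hv, rfl⟩
  choose m _ hm using fun i => hv ⟨i, rfl⟩
  obtain rfl : v = fun i => 1 ⊗ₜ m i := funext fun i => (hm i).symm
  exact h m

end exteriorPower

theorem tensorPowerToExteriorPower_tprod (A : Type*) [CommRing A] (B : Type*) [CommRing B]
    [Algebra A B] (d : ℕ) (b : Fin d → B) :
    tensorPowerToExteriorPower A B d (tprod A b) = exteriorPower.ιMulti A d b :=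
  PiTensorProduct.lift.tprod b

theorem RingHom.map_smul_of_map_algebraMap {A A' X Y : Type*} [CommSemiring A] [CommSemiring A']
    [Algebra A A'] [Semiring X] [Algebra A X] [Semiring Y] [Algebra A' Y] (c : X →+* Y)
    (hc : ∀ a, c (algebraMap A X a) = algebraMap A' Y (algebraMap A A' a)) (a : A) (x : X) :
    c (a • x) = algebraMap A A' a • c x := by
  rw [Algebra.smul_def, map_mul, hc, ← Algebra.smul_def]

theorem map_reindex_of_map_tprod {A A' M : Type*} [CommRing A] [CommRing A'] [Algebra A A']
    [AddCommGroup M] [Module A M] {ι : Type*}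
    (c : (⨂[A] (_ : ι), M) →+ ⨂[A'] (_ : ι), (A' ⊗[A] M))
    (hc_smul : ∀ (a : A) x, c (a • x) = algebraMap A A' a • c x)
    (hc_tprod : ∀ m : ι → M, c (tprod A m) = tprod A' (fun i => (1 : A') ⊗ₜ[A] m i))
    (σ : Equiv.Perm ι) (x : ⨂[A] (_ : ι), M) :
    c (reindex A (fun _ => M) σ x) = reindex A' (fun _ => A' ⊗[A] M) σ (c x) := by
  induction x using PiTensorProduct.induction_on with
  | smul_tprod a m => simp only [map_smul, hc_smul, hc_tprod, reindex_tprod]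
  | add x y hx hy => simp only [map_add, hx, hy]

theorem tensorPowerToExteriorPower_map_of_map_tprod {A A' B : Type*} [CommRing A] [CommRing A']
    [Algebra A A'] [CommRing B] [Algebra A B] {d : ℕ}
    (c : (⨂[A] (_ : Fin d), B) →+ ⨂[A'] (_ : Fin d), (A' ⊗[A] B))
    (hc_smul : ∀ (a : A) x, c (a • x) = algebraMap A A' a • c x)
    (hc_tprod : ∀ b : Fin d → B, c (tprod A b) = tprod A' (fun i => (1 : A') ⊗ₜ[A] b i))
    (y : ⨂[A] (_ : Fin d), B) :
    tensorPowerToExteriorPower A' (A' ⊗[A] B) d (c y) =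
      exteriorPower.toBaseChange A A' B d (tensorPowerToExteriorPower A B d y) := by
  induction y using PiTensorProduct.induction_on with
  | smul_tprod a b =>
    rw [hc_smul, hc_tprod, map_smul, map_smul, map_smul, tensorPowerToExteriorPower_tprod,
      tensorPowerToExteriorPower_tprod, exteriorPower.toBaseChange_ιMulti, algebraMap_smul]
  | add x y hx hy => simp only [map_add, hx, hy]

theorem norm_hom_base_change_general
    (A : Type) [CommRing A] (d : ℕ)
    (B : Type) [CommRing B] [Algebra A B] [Module.Finite A B] [Module.Projective A B]
    (hrank : ∀ p : PrimeSpectrum A, Module.rankAtStalk B p = d)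
    (A' : Type) [CommRing A'] [Algebra A A']
    -- the canonical base change homomorphism `c`
    (c : (⨂[A] (_ : Fin d), B) →+* (⨂[A'] (_ : Fin d), (A' ⊗[A] B)))
    (hc_tprod : ∀ b : Fin d → B,
      c (PiTensorProduct.tprod A b) =
        PiTensorProduct.tprod A' (fun i => (1 : A') ⊗ₜ[A] b i))
    (hc_alg : ∀ a : A, c (algebraMap A (⨂[A] (_ : Fin d), B) a) =
      algebraMap A' (⨂[A'] (_ : Fin d), (A' ⊗[A] B)) (algebraMap A A' a)) :
    -- (i) `c` is `S_d`-equivariant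
    (∀ (σ : Equiv.Perm (Fin d)) (x : ⨂[A] (_ : Fin d), B),
      c (PiTensorProduct.reindex A (fun _ : Fin d => B) σ x) =
        PiTensorProduct.reindex A' (fun _ : Fin d => (A' ⊗[A] B)) σ (c x)) ∧
    -- (ii) hence `c` carries invariants to invariants
    (∀ s : ⨂[A] (_ : Fin d), B,
      (∀ σ : Equiv.Perm (Fin d), PiTensorProduct.reindex A (fun _ : Fin d => B) σ s = s) →
      (∀ σ : Equiv.Perm (Fin d),
        PiTensorProduct.reindex A' (fun _ : Fin d => (A' ⊗[A] B)) σ (c s) = c s)) ∧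
    -- (iii) compatibility of the norm homomorphisms with base change
    (∀ (φ : (⨂[A] (_ : Fin d), B) → A) (φ' : (⨂[A'] (_ : Fin d), (A' ⊗[A] B)) → A'),
      (∀ s : ⨂[A] (_ : Fin d), B,
        (∀ σ : Equiv.Perm (Fin d), PiTensorProduct.reindex A (fun _ : Fin d => B) σ s = s) →
        ∀ x, tensorPowerToExteriorPower A B d (s * x) =
          φ s • tensorPowerToExteriorPower A B d x) →
      (∀ s' : ⨂[A'] (_ : Fin d), (A' ⊗[A] B),
        (∀ σ : Equiv.Perm (Fin d),
          PiTensorProduct.reindex A' (fun _ : Fin d => (A' ⊗[A] B)) σ s' = s') →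
        ∀ x', tensorPowerToExteriorPower A' (A' ⊗[A] B) d (s' * x') =
          φ' s' • tensorPowerToExteriorPower A' (A' ⊗[A] B) d x') →
      ∀ s : ⨂[A] (_ : Fin d), B,
        (∀ σ : Equiv.Perm (Fin d), PiTensorProduct.reindex A (fun _ : Fin d => B) σ s = s) →
        φ' (c s) = algebraMap A A' (φ s)) := by
  have hc_smul := c.map_smul_of_map_algebraMap hc_alg
  have equivariant : ∀ σ x, c (reindex A _ σ x) = reindex A' _ σ (c x) :=
    map_reindex_of_map_tprod c.toAddMonoidHom hc_smul hc_tprod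
  have invariant s (hs : ∀ σ, reindex A _ σ s = s) σ : reindex A' _ σ (c s) = c s := by
    rw [← equivariant, hs]
  refine ⟨equivariant, invariant, fun φ φ' hφ hφ' s hs => ?_⟩
  have : FaithfulSMul A' (⋀[A']^d (A' ⊗[A] B)) :=
    exteriorPower.faithfulSMul_of_rankAtStalk_eq fun q =>
      (Module.rankAtStalk_baseChange q).trans (hrank _)
  suffices h : φ' (c s) • LinearMap.id =
      algebraMap A A' (φ s) • (LinearMap.id : ⋀[A']^d (A' ⊗[A] B) →ₗ[A'] _) from
    eq_of_smul_eq_smul (LinearMap.congr_fun h)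
  refine exteriorPower.linearMap_ext_baseChange fun b => ?_
  have hπ := tensorPowerToExteriorPower_map_of_map_tprod c.toAddMonoidHom hc_smul hc_tprod
  calc φ' (c s) • exteriorPower.ιMulti A' d (fun i => 1 ⊗ₜ b i)
      = φ' (c s) • tensorPowerToExteriorPower A' (A' ⊗[A] B) d (c (tprod A b)) := by
        rw [hc_tprod, tensorPowerToExteriorPower_tprod]
    _ = exteriorPower.toBaseChange A A' B d
          (tensorPowerToExteriorPower A B d (s * tprod A b)) := by
        rw [← hφ' _ (invariant s hs), ← map_mul]
        exact hπ _
    _ = algebraMap A A' (φ s) • exteriorPower.ιMulti A' d (fun i => 1 ⊗ₜ b i) := by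
        rw [hφ s hs, map_smul, tensorPowerToExteriorPower_tprod,
          exteriorPower.toBaseChange_ιMulti, algebraMap_smul]

/-- Let `A` be a commutative ring, `d` a positive integer, `B` a commutative
`A`-algebra finite locally free of rank `d`, `f : A → A'` a ring homomorphism and
`B' = A' ⊗_A B`. The canonical base-change `A`-algebra homomorphism `c : B^{⊗d} → B'^{⊗d}` is
`S_d`-equivariant, hence carries `S^d_A(B)` into `S^d_{A'}(B')`, and the norm homomorphisms
(characterized by `π(s·x) = φ(s)·π(x)`) satisfy `φ_{B'/A'}(c(s)) = f(φ_{B/A}(s))` for every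
`s ∈ S^d_A(B)`. -/
theorem norm_hom_base_change
    (A : Type) [CommRing A] (d : ℕ) (hd : 0 < d)
    (B : Type) [CommRing B] [Algebra A B] [Module.Finite A B] [Module.Projective A B]
    (hrank : ∀ p : PrimeSpectrum A, Module.rankAtStalk B p = d)
    (A' : Type) [CommRing A'] [Algebra A A']
    -- the canonical base change homomorphism `c`
    (c : (⨂[A] (_ : Fin d), B) →+* (⨂[A'] (_ : Fin d), (A' ⊗[A] B)))
    (hc_tprod : ∀ b : Fin d → B,
      c (PiTensorProduct.tprod A b) =
        PiTensorProduct.tprod A' (fun i => (1 : A') ⊗ₜ[A] b i))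
    (hc_alg : ∀ a : A, c (algebraMap A (⨂[A] (_ : Fin d), B) a) =
      algebraMap A' (⨂[A'] (_ : Fin d), (A' ⊗[A] B)) (algebraMap A A' a)) :
    -- (i) `c` is `S_d`-equivariant
    (∀ (σ : Equiv.Perm (Fin d)) (x : ⨂[A] (_ : Fin d), B),
      c (PiTensorProduct.reindex A (fun _ : Fin d => B) σ x) =
        PiTensorProduct.reindex A' (fun _ : Fin d => (A' ⊗[A] B)) σ (c x)) ∧
    -- (ii) hence `c` carries invariants to invariants
    (∀ s : ⨂[A] (_ : Fin d), B,
      (∀ σ : Equiv.Perm (Fin d), PiTensorProduct.reindex A (fun _ : Fin d => B) σ s = s) →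
      (∀ σ : Equiv.Perm (Fin d),
        PiTensorProduct.reindex A' (fun _ : Fin d => (A' ⊗[A] B)) σ (c s) = c s)) ∧
    -- (iii) compatibility of the norm homomorphisms with base change
    (∀ (φ : (⨂[A] (_ : Fin d), B) → A) (φ' : (⨂[A'] (_ : Fin d), (A' ⊗[A] B)) → A'),
      (∀ s : ⨂[A] (_ : Fin d), B,
        (∀ σ : Equiv.Perm (Fin d), PiTensorProduct.reindex A (fun _ : Fin d => B) σ s = s) →
        ∀ x, tensorPowerToExteriorPower A B d (s * x) =
          φ s • tensorPowerToExteriorPower A B d x) →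
      (∀ s' : ⨂[A'] (_ : Fin d), (A' ⊗[A] B),
        (∀ σ : Equiv.Perm (Fin d),
          PiTensorProduct.reindex A' (fun _ : Fin d => (A' ⊗[A] B)) σ s' = s') →
        ∀ x', tensorPowerToExteriorPower A' (A' ⊗[A] B) d (s' * x') =
          φ' s' • tensorPowerToExteriorPower A' (A' ⊗[A] B) d x') →
      ∀ s : ⨂[A] (_ : Fin d), B,
        (∀ σ : Equiv.Perm (Fin d), PiTensorProduct.reindex A (fun _ : Fin d => B) σ s = s) →
        φ' (c s) = algebraMap A A' (φ s)) :=
  norm_hom_base_change_general A d B hrank A' c hc_tprod hc_alg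
end

section
/- Let R be a commutative ring, A a commutative R-algebra, and v, s ∈ A. Suppose there are polynomials p_1, …, p_n ∈ R[X] such that s^n + p_1(v)·s^{n−1} + ⋯ + p_n(v) = 0 in A, where p_i(v) denotes the evaluation of p_i at v. Let N be an integer with N ≥ 2 and N > deg p_i for all i = 1, …, n, let r be a unit of R, and set u = s − r·v^N. Then v is integral over the R-subalgebra R[u] of A generated by u; consequently s is also integral over R[u], and if A is integral over the R-subalgebra R[v] generated by v, then A is integral over R[u]. -/
/-!
Put `T = R[u]`. Since `s = r v^N + u`, the element `v` is a root of
`Q = g^n + ∑ pᵢ g^(n-1-i) ∈ T[X]` with `g = r X^N + u`. As every `pᵢ` has degree `< N = deg g`,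
the leading term of `Q` is that of `g^n`, namely the unit `r^n`, so `v` is integral over `T`, and
then so is `s = u + r v^N`. Finally `R[v]` lies in the integral closure of `T` in `A`, so
integrality over `R[v]` passes to `T` by transitivity.
-/

open Polynomial

namespace Polynomial

variable {T : Type*} [Semiring T]

theorem leadingCoeff_pow_add_sum_mul_pow {g : T[X]} (hg : IsUnit g.leadingCoeff) {n : ℕ}
    (q : Fin n → T[X]) (hq : ∀ i, (q i).degree < g.natDegree) :
    (g ^ n + ∑ i, q i * g ^ (n - 1 - i)).leadingCoeff = g.leadingCoeff ^ n := by
  nontriviality T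
  have hlc : g.leadingCoeff ^ n ≠ 0 := (hg.pow n).ne_zero
  have hgn : (g ^ n).degree = ↑(n * g.natDegree) := by
    rw [degree_pow' hlc, degree_eq_natDegree (leadingCoeff_ne_zero.mp hg.ne_zero)]
    norm_cast
  have hterm (i : Fin n) : (q i * g ^ (n - 1 - i)).degree < ↑(n * g.natDegree) := by
    obtain hqi | hqi := eq_or_ne (q i) 0
    · rw [hqi, zero_mul, degree_zero]
      exact WithBot.bot_lt_coe _
    have hlt : (q i).natDegree < g.natDegree := (natDegree_lt_iff_degree_lt hqi).mpr (hq i)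
    calc (q i * g ^ (n - 1 - i)).degree
        ≤ ↑((q i).natDegree + (n - 1 - i) * g.natDegree) := by
          refine degree_le_of_natDegree_le (natDegree_mul_le.trans ?_)
          gcongr
          exact natDegree_pow_le
      _ < ↑(n * g.natDegree) := by
          have hk : (n - 1 - i + 1) * g.natDegree ≤ n * g.natDegree := by gcongr; omega
          rw [add_one_mul] at hk
          exact_mod_cast (by linarith)
  have hsum : (∑ i, q i * g ^ (n - 1 - i)).degree < (g ^ n).degree := by
    rw [hgn]
    exact (degree_sum_le _ _).trans_lt <|
      (Finset.sup_lt_iff (WithBot.bot_lt_coe _)).mpr fun i _ => hterm i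
  rw [leadingCoeff_add_of_degree_lt' hsum, leadingCoeff_pow' hlc]

theorem degree_C_lt_degree_C_mul_X_pow {a : T} (b : T) {N : ℕ} (ha : a ≠ 0) (hN : N ≠ 0) :
    (C b).degree < (C a * X ^ N).degree := by
  rw [degree_C_mul_X_pow N ha]
  exact degree_C_le.trans_lt (by exact_mod_cast Nat.pos_of_ne_zero hN)

theorem leadingCoeff_C_mul_X_pow_add_C {a : T} (b : T) {N : ℕ} (ha : a ≠ 0) (hN : N ≠ 0) :
    (C a * X ^ N + C b).leadingCoeff = a := by
  rw [leadingCoeff_add_of_degree_lt' (degree_C_lt_degree_C_mul_X_pow b ha hN),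
    leadingCoeff_C_mul_X_pow]

theorem natDegree_C_mul_X_pow_add_C {a : T} (b : T) {N : ℕ} (ha : a ≠ 0) (hN : N ≠ 0) :
    (C a * X ^ N + C b).natDegree = N := by
  rw [natDegree_add_eq_left_of_degree_lt (degree_C_lt_degree_C_mul_X_pow b ha hN),
    natDegree_C_mul_X_pow N a ha]

end Polynomial

theorem IsIntegral.of_aeval_eq_zero_of_isUnit_leadingCoeff {R A : Type*} [CommRing R] [Ring A]
    [Algebra R A] {p : R[X]} (hp : IsUnit p.leadingCoeff) {x : A} (hx : aeval x p = 0) :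
    IsIntegral R x := by
  obtain ⟨c, hc⟩ := hp
  refine ⟨C ↑c⁻¹ * p, monic_C_mul_of_mul_leadingCoeff_eq_one (by simp [← hc]), ?_⟩
  rw [← aeval_def, map_mul, hx, mul_zero]

theorem IsIntegral.of_isIntegral_adjoin {R T A : Type*} [CommRing R] [CommRing T] [CommRing A]
    [Algebra R T] [Algebra T A] [Algebra R A] [IsScalarTower R T A] {S : Set A}
    (hS : ∀ v ∈ S, IsIntegral T v) {a : A} (ha : IsIntegral (Algebra.adjoin R S) a) :
    IsIntegral T a := by
  have hle : Algebra.adjoin R S ≤ (integralClosure T A).restrictScalars R :=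
    Algebra.adjoin_le hS
  have : IsIntegral (integralClosure T A) a :=
    ha.map_of_comp_eq (Subalgebra.inclusion hle).toRingHom (RingHom.id A) rfl
  exact isIntegral_trans a this

/-- Let `R` be a commutative ring, `A` a commutative `R`-algebra, and `v, s ∈ A`.
Suppose there are polynomials `p_1, …, p_n ∈ R[X]` such that
`s^n + p_1(v)·s^{n−1} + ⋯ + p_n(v) = 0` in `A`. Let `N` be an integer with `N ≥ 2` and
`N > deg p_i` for all `i`, let `r` be a unit of `R`, and set `u = s − r·v^N`. Then `v` is integral
over the `R`-subalgebra `R[u]` of `A` generated by `u`; consequently `s` is also integral over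
`R[u]`, and if `A` is integral over the `R`-subalgebra `R[v]`, then `A` is integral over `R[u]`. -/
theorem integral_over_adjoin_of_poly_relation
    (R : Type*) [CommRing R] (A : Type*) [CommRing A] [Algebra R A]
    (v s : A) (n : ℕ) (p : Fin n → Polynomial R)
    (hrel : s ^ n + ∑ i : Fin n, Polynomial.aeval v (p i) * s ^ (n - 1 - (i : ℕ)) = 0)
    (N : ℕ) (hN2 : 2 ≤ N) (hNdeg : ∀ i : Fin n, (p i).degree < (N : ℕ))
    (r : Rˣ) (u : A) (hu : u = s - algebraMap R A (r : R) * v ^ N) :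
    IsIntegral (Algebra.adjoin R ({u} : Set A)) v ∧
      IsIntegral (Algebra.adjoin R ({u} : Set A)) s ∧
      (Algebra.IsIntegral (Algebra.adjoin R ({v} : Set A)) A →
        Algebra.IsIntegral (Algebra.adjoin R ({u} : Set A)) A) := by
  set T := Algebra.adjoin R ({u} : Set A)
  have hu_mem : u ∈ T := Algebra.self_mem_adjoin_singleton R u
  set g : T[X] := C (algebraMap R T r) * X ^ N + C ⟨u, hu_mem⟩
  have hg_unit : IsUnit g.leadingCoeff := by
    nontriviality ↥(Algebra.adjoin R ({u} : Set A))
    rw [leadingCoeff_C_mul_X_pow_add_C _ (r.isUnit.map _).ne_zero (by omega)]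
    exact r.isUnit.map _
  have hp_deg (i : Fin n) : ((p i).map (algebraMap R T)).degree < g.natDegree := by
    nontriviality ↥(Algebra.adjoin R ({u} : Set A))
    rw [natDegree_C_mul_X_pow_add_C _ (r.isUnit.map _).ne_zero (by omega)]
    exact degree_map_le.trans_lt (hNdeg i)
  have hg_eval : aeval v g = s := by
    simp [g, hu, ← IsScalarTower.algebraMap_apply]
  have hv : IsIntegral T v := by
    refine .of_aeval_eq_zero_of_isUnit_leadingCoeff
      (p := g ^ n + ∑ i, (p i).map (algebraMap R T) * g ^ (n - 1 - i)) ?_ ?_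
    · rw [leadingCoeff_pow_add_sum_mul_pow hg_unit _ hp_deg]
      exact hg_unit.pow n
    · simpa [hg_eval] using hrel
  have hs : IsIntegral T s := by
    rw [show s = u + algebraMap R A r * v ^ N by rw [hu]; ring]
    exact (isIntegral_algebraMap (x := (⟨u, hu_mem⟩ : T))).add
      ((isIntegral_algebraMap (R := R)).tower_top.mul (hv.pow N))
  refine ⟨hv, hs, fun hA => ⟨fun a => .of_isIntegral_adjoin ?_ (hA.isIntegral a)⟩⟩
  rintro _ rfl
  exact hv
end

section
/- Let k be an infinite field and R a semi-local essentially smooth k-algebra which is a domain with fraction field K and maximal ideals p_1, …, p_r. Let A be a commutative R[t]-algebra which is smooth as an R-algebra and finite as an R[t]-module, with each A/p_iA equi-dimensional of dimension 1 over R/p_i; let ε : A → R be an R-algebra homomorphism with kernel I, and let f ∈ A satisfy ε(f) ≠ 0 with A/fA a finite R-module. Let u ∈ A satisfy: (1) A is a finite projective R[X]-module via ι_u; (2) uA = I ∩ J and I + J = A for some ideal J ⊆ A; (3) J + fA = A; (4) (u−1)A + fA = A. Set A_K = K ⊗_R A; then A_K is a finite free K[X]-module via X ↦ u, and the norm N(f)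 = N_{A_K/K[u]}(f) ∈ K[X], i.e. the determinant of multiplication by f on the K[X]-module A_K, does not vanish at the points 0 and 1 of the affine line: the evaluations of N(f) at X = 0 and at X = 1 are both nonzero elements of K. -/
/-!
Over the principal ideal domain `K[X]`, the module `A_K = K ⊗_R A` is finite and torsion-free
(it is a localization of the projective, hence torsion-free, `R[X]`-module `A`), hence free.
Evaluating the norm at `c` is the determinant of multiplication by `f` on `A_K / (u - c)`, so
`N(f)(c)` is a unit as soon as `f` and `u - c` are coprime in `A_K`. For `c = 1` this is
hypothesis (4). For `c = 0`, since `J + fA = A` we get `fA + I = fA + IJ ⊆ fA + uA`, and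
`ε(f) ≡ f` modulo `I`, so `ε(f)`, which is nonzero and hence a unit in `A_K`, lies in `fA + uA`.
-/

open Polynomial TensorProduct

theorem Polynomial.isUnit_eval_det_mulLeft_of_isCoprime {R B : Type*} [CommRing R] [CommRing B]
    [Algebra R[X] B] [Module.Free R[X] B] [Module.Finite R[X] B] {b : B} {c : R}
    (h : IsCoprime b (algebraMap R[X] B (X - C c))) :
    IsUnit ((LinearMap.det (LinearMap.mulLeft R[X] b)).eval c) := by
  let _ : Algebra R[X] R := (evalRingHom c).toAlgebra
  have hXc : algebraMap R[X] (R ⊗[R[X]] B) (X - C c) = 0 := by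
    rw [IsScalarTower.algebraMap_apply R[X] R, RingHom.algebraMap_toAlgebra]
    simp
  have hb : IsUnit ((1 : R) ⊗ₜ[R[X]] b) := by
    have := h.map (Algebra.TensorProduct.includeRight (R := R[X]) (A := R) (B := B)).toRingHom
    rwa [AlgHom.toRingHom_eq_coe, RingHom.coe_coe, AlgHom.commutes, hXc,
      isCoprime_zero_right] at this
  have hBC : (LinearMap.mulLeft R[X] b).baseChange R =
      LinearMap.mulLeft R ((1 : R) ⊗ₜ[R[X]] b) := by
    ext
    simp
  have : IsUnit (LinearMap.det (LinearMap.mulLeft R ((1 : R) ⊗ₜ[R[X]] b))) :=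
    (hb.map (Algebra.lmul R (R ⊗[R[X]] B))).map LinearMap.det
  rwa [← hBC, LinearMap.det_baseChange] at this

theorem isCoprime_map_of_mem_span_sup {A B F : Type*} [CommRing A] [CommRing B] [FunLike F A B]
    [RingHomClass F A B] (φ : F) {a b x : A} (hx : x ∈ Ideal.span {a} ⊔ Ideal.span {b})
    (hφx : IsUnit (φ x)) : IsCoprime (φ a) (φ b) := by
  rw [← Ideal.isCoprime_span_singleton_iff, Ideal.isCoprime_iff_sup_eq, ← Set.image_singleton,
    ← Set.image_singleton, ← Ideal.map_span, ← Ideal.map_span, ← Ideal.map_sup]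
  exact Ideal.eq_top_of_isUnit_mem _ (Ideal.mem_map_of_mem φ hx) hφx

theorem AlgHom.algebraMap_apply_mem_span_sup {R A : Type*} [CommRing R] [CommRing A] [Algebra R A]
    (ε : A →ₐ[R] R) {f u : A} {J : Ideal A} (hu : Ideal.span {u} = RingHom.ker ε ⊓ J)
    (hJf : J ⊔ Ideal.span {f} = ⊤) :
    algebraMap R A (ε f) ∈ Ideal.span {f} ⊔ Ideal.span {u} := by
  have hker : Ideal.span {f} ⊔ RingHom.ker ε ≤ Ideal.span {f} ⊔ Ideal.span {u} := by
    rw [← Ideal.sup_mul_eq_of_coprime_right (sup_comm J _ ▸ hJf), hu]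
    exact sup_le_sup_left Ideal.mul_le_inf _
  refine hker ?_
  rw [show algebraMap R A (ε f) = f - (f - algebraMap R A (ε f)) by ring]
  refine Ideal.sub_mem _ (Ideal.mem_sup_left (Ideal.mem_span_singleton_self f))
    (Ideal.mem_sup_right ?_)
  simp [RingHom.mem_ker]

section PolynomialBaseChange

variable {R K A : Type*} [CommRing R] [CommRing K] [Algebra R K] [CommRing A] [Algebra R A]
  [Algebra R[X] A] [IsScalarTower R R[X] A]
  [Algebra K[X] (K ⊗[R] A)] [IsScalarTower K K[X] (K ⊗[R] A)]

theorem one_tmul_algebraMap_polynomial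
    (hX : algebraMap K[X] (K ⊗[R] A) X = 1 ⊗ₜ algebraMap R[X] A X) (q : R[X]) :
    (1 : K) ⊗ₜ[R] algebraMap R[X] A q = algebraMap K[X] (K ⊗[R] A) (q.map (algebraMap R K)) := by
  induction q using Polynomial.induction_on' with
  | add p q hp hq => simp [tmul_add, hp, hq]
  | monomial n a =>
    rw [← C_mul_X_pow_eq_monomial]
    simp only [map_mul, map_pow, hX, Polynomial.map_mul, Polynomial.map_pow, map_C, map_X]
    rw [← algebraMap_eq, ← algebraMap_eq, ← IsScalarTower.algebraMap_apply,
      ← IsScalarTower.algebraMap_apply, ← IsScalarTower.algebraMap_apply R K]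
    change Algebra.TensorProduct.includeRight (R := R) (A := K) (_ * _) = _
    rw [map_mul, map_pow, AlgHom.commutes]
    rfl

theorem one_tmul_polynomial_smul
    (hX : algebraMap K[X] (K ⊗[R] A) X = 1 ⊗ₜ algebraMap R[X] A X) (q : R[X]) (a : A) :
    (1 : K) ⊗ₜ[R] (q • a) = q.map (algebraMap R K) • ((1 : K) ⊗ₜ[R] a) := by
  rw [Algebra.smul_def, Algebra.smul_def, ← one_tmul_algebraMap_polynomial hX,
    Algebra.TensorProduct.tmul_mul_tmul, one_mul]

theorem finite_tensor_polynomial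
    (hX : algebraMap K[X] (K ⊗[R] A) X = 1 ⊗ₜ algebraMap R[X] A X) [Module.Finite R[X] A] :
    Module.Finite K[X] (K ⊗[R] A) := by
  obtain ⟨s, hs⟩ := Module.Finite.fg_top (R := R[X]) (M := A)
  let N := Submodule.span K[X] ((fun a : A => (1 : K) ⊗ₜ[R] a) '' s)
  have hA (a : A) : (1 : K) ⊗ₜ[R] a ∈ N := by
    have ha : a ∈ Submodule.span R[X] (s : Set A) := hs ▸ Submodule.mem_top
    induction ha using Submodule.span_induction with
    | mem x hx => exact Submodule.subset_span ⟨x, hx, rfl⟩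
    | zero => rw [tmul_zero]; exact zero_mem N
    | add x y _ _ hx hy => rw [tmul_add]; exact add_mem hx hy
    | smul q x _ hx => rw [one_tmul_polynomial_smul hX]; exact N.smul_mem _ hx
  refine ⟨Submodule.fg_def.2 ⟨_, s.finite_toSet.image _, N.eq_top_iff'.2 fun t => ?_⟩⟩
  induction t using TensorProduct.induction_on with
  | zero => exact zero_mem N
  | add x y hx hy => exact add_mem hx hy
  | tmul k a => simpa [smul_tmul'] using N.smul_of_tower_mem k (hA a)

end PolynomialBaseChange

theorem isTorsionFree_tensor_polynomial {R K A : Type*} [CommRing R] [IsDomain R] [Field K]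
    [Algebra R K] [IsFractionRing R K] [CommRing A] [Algebra R A] [Algebra R[X] A]
    [IsScalarTower R R[X] A] [Algebra K[X] (K ⊗[R] A)] [IsScalarTower K K[X] (K ⊗[R] A)]
    (hX : algebraMap K[X] (K ⊗[R] A) X = 1 ⊗ₜ algebraMap R[X] A X) [Module.IsTorsionFree R[X] A] :
    Module.IsTorsionFree K[X] (K ⊗[R] A) := by
  have : Module.IsTorsionFree R A := .trans R[X]
  have : IsLocalizedModule (nonZeroDivisors R) (TensorProduct.mk R K A 1) :=
    (isLocalizedModule_iff_isBaseChange _ K _).mpr (TensorProduct.isBaseChange R A K)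
  refine .of_smul_eq_zero fun q t hqt => or_iff_not_imp_left.2 fun hq => ?_
  obtain ⟨⟨a, s⟩, hsa⟩ := IsLocalizedModule.surj (nonZeroDivisors R) (TensorProduct.mk R K A 1) t
  change (s : R) • t = (1 : K) ⊗ₜ[R] a at hsa
  obtain ⟨b, -, hqb⟩ := IsLocalization.integerNormalization_spec (nonZeroDivisors R) q
  set q' := IsLocalization.integerNormalization (nonZeroDivisors R) q
  have hq' : q' ≠ 0 := by rwa [Ne, IsFractionRing.integerNormalization_eq_zero_iff]
  have hs : algebraMap R K s ≠ 0 := IsFractionRing.to_map_ne_zero_of_mem_nonZeroDivisors s.2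
  have hzero : TensorProduct.mk R K A 1 (q' • a) = 0 := by
    rw [TensorProduct.mk_apply, one_tmul_polynomial_smul hX, hqb, ← hsa, ← algebraMap_smul K b q,
      ← algebraMap_smul K (s : R) t, smul_assoc, smul_algebra_smul_comm _ q, hqt, smul_zero,
      smul_zero]
  obtain ⟨s', hs'⟩ := (IsLocalizedModule.eq_zero_iff (nonZeroDivisors R) _).mp hzero
  rw [Submonoid.smul_def, smul_eq_zero_iff_right (nonZeroDivisors.coe_ne_zero s'),
    smul_eq_zero_iff_right hq'] at hs'
  rwa [hs', tmul_zero, ← algebraMap_smul K, smul_eq_zero_iff_right hs] at hsa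

theorem norm_does_not_vanish_at_zero_and_one_general
    -- `R` is a semi-local essentially smooth `k`-algebra which is a domain
    (R : Type) [CommRing R] [IsDomain R]
    -- `K` is the fraction field of `R`
    (K : Type) [Field K] [Algebra R K] [IsFractionRing R K]
    -- `A` is an `R[t]`-algebra (via `ρ`), smooth as an `R`-algebra, finite over `R[t]`
    (A : Type) [CommRing A] [Algebra R A]
    -- the augmentation and the element `f`
    (ε : A →ₐ[R] R) (f : A) (hf : ε f ≠ 0)
    (u : A) :
    letI : Algebra (Polynomial R) A :=
      (Polynomial.aeval u : Polynomial R →ₐ[R] A).toRingHom.toAlgebra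
    -- `u` satisfies conclusions (1)–(4) of Statement 6:
    Module.Finite (Polynomial R) A →
    Module.Projective (Polynomial R) A →
    (∃ J : Ideal A, Ideal.span ({u} : Set A) = RingHom.ker ε ⊓ J ∧
      RingHom.ker ε ⊔ J = ⊤ ∧ J ⊔ Ideal.span ({f} : Set A) = ⊤) →
    Ideal.span ({u - 1} : Set A) ⊔ Ideal.span ({f} : Set A) = ⊤ →
    -- the conclusions about `A_K = K ⊗[R] A` as a `K[X]`-module via `X ↦ 1 ⊗ u`:
    (letI : Algebra (Polynomial K) (TensorProduct R K A) :=
      (Polynomial.aeval ((1 : K) ⊗ₜ[R] u) :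
        Polynomial K →ₐ[K] TensorProduct R K A).toRingHom.toAlgebra;
      Module.Finite (Polynomial K) (TensorProduct R K A) ∧
      Module.Free (Polynomial K) (TensorProduct R K A) ∧
      Polynomial.eval (0 : K)
        (LinearMap.det (LinearMap.mulLeft (Polynomial K) ((1 : K) ⊗ₜ[R] f))) ≠ 0 ∧
      Polynomial.eval (1 : K)
        (LinearMap.det (LinearMap.mulLeft (Polynomial K) ((1 : K) ⊗ₜ[R] f))) ≠ 0) := by
  let _ : Algebra R[X] A := (aeval u).toRingHom.toAlgebra
  rintro _ _ ⟨J, hu, -, hJf⟩ hu1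
  let _ : Algebra K[X] (K ⊗[R] A) := (aeval ((1 : K) ⊗ₜ[R] u)).toRingHom.toAlgebra
  have : IsScalarTower R R[X] A := .of_algebraMap_eq' (aeval u).comp_algebraMap.symm
  have : IsScalarTower K K[X] (K ⊗[R] A) := .of_algebraMap_eq' (aeval _).comp_algebraMap.symm
  let ι : A →ₐ[R] K ⊗[R] A := Algebra.TensorProduct.includeRight
  have hX : algebraMap K[X] (K ⊗[R] A) X = ι (algebraMap R[X] A X) := by
    simp [ι, RingHom.algebraMap_toAlgebra]
  have hXu : algebraMap R[X] A X = u := aeval_X u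
  have := finite_tensor_polynomial hX
  have := isTorsionFree_tensor_polynomial hX
  have hcop0 : IsCoprime ((1 : K) ⊗ₜ[R] f) (algebraMap K[X] (K ⊗[R] A) (X - C 0)) := by
    have hεf : IsUnit (ι (algebraMap R A (ε f))) := by
      rw [AlgHom.commutes, IsScalarTower.algebraMap_apply R K]
      exact (IsUnit.mk0 _ ((map_ne_zero_iff _ (IsFractionRing.injective R K)).2 hf)).map _
    rw [C_0, sub_zero, hX, hXu]
    exact isCoprime_map_of_mem_span_sup ι (ε.algebraMap_apply_mem_span_sup hu hJf) hεf
  have hcop1 : IsCoprime ((1 : K) ⊗ₜ[R] f) (algebraMap K[X] (K ⊗[R] A) (X - C 1)) := by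
    have h : IsCoprime f (u - 1) := by
      rwa [← Ideal.isCoprime_span_singleton_iff, Ideal.isCoprime_iff_sup_eq, sup_comm]
    rw [C_1, map_sub, map_one, hX, hXu, ← map_one ι, ← map_sub]
    exact h.map (ι : A →+* K ⊗[R] A)
  exact ⟨inferInstance, inferInstance, (isUnit_eval_det_mulLeft_of_isCoprime hcop0).ne_zero,
    (isUnit_eval_det_mulLeft_of_isCoprime hcop1).ne_zero⟩

/-- Under the setting of Statement 6 with `R` a domain with fraction field `K`,
let `u ∈ A` satisfy conclusions (1)–(4) of Statement 6. Set `A_K = K ⊗_R A`; then `A_K` is a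
finite free `K[X]`-module via `X ↦ 1 ⊗ u`, and the norm `N(f) ∈ K[X]`, i.e. the determinant of
multiplication by `1 ⊗ f` on the `K[X]`-module `A_K`, does not vanish at the points `0` and `1`
of the affine line. -/
theorem norm_does_not_vanish_at_zero_and_one
    (k : Type) [Field k] [Infinite k]
    -- `R` is a semi-local essentially smooth `k`-algebra which is a domain
    (R : Type) [CommRing R] [IsDomain R] [Algebra k R] [IsNoetherianRing R]
    [Algebra.EssFiniteType k R] [Algebra.FormallySmooth k R]
    (r : ℕ) (p : Fin r → Ideal R) (hp : ∀ i, (p i).IsMaximal)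
    (hsemilocal : ∀ m : Ideal R, m.IsMaximal → ∃ i, m = p i)
    -- `K` is the fraction field of `R`
    (K : Type) [Field K] [Algebra R K] [IsFractionRing R K]
    -- `A` is an `R[t]`-algebra (via `ρ`), smooth as an `R`-algebra, finite over `R[t]`
    (A : Type) [CommRing A] [Algebra R A] [Algebra.Smooth R A]
    (ρ : Polynomial R →+* A) (hρ : ∀ a : R, ρ (Polynomial.C a) = algebraMap R A a)
    (hfinρ : ρ.Finite)
    -- each `A/p_iA` is equi-dimensional of dimension one
    (hequi : ∀ i, ∀ q ∈ minimalPrimes (A ⧸ (p i).map (algebraMap R A)),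
      ringKrullDim ((A ⧸ (p i).map (algebraMap R A)) ⧸ q) = 1)
    -- the augmentation and the element `f`
    (ε : A →ₐ[R] R) (f : A) (hf : ε f ≠ 0)
    (hAf : Module.Finite R (A ⧸ Ideal.span ({f} : Set A)))
    (u : A) :
    letI : Algebra (Polynomial R) A :=
      (Polynomial.aeval u : Polynomial R →ₐ[R] A).toRingHom.toAlgebra
    -- `u` satisfies conclusions (1)–(4) of Statement 6:
    Module.Finite (Polynomial R) A →
    Module.Projective (Polynomial R) A →
    (∃ J : Ideal A, Ideal.span ({u} : Set A) = RingHom.ker ε ⊓ J ∧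
      RingHom.ker ε ⊔ J = ⊤ ∧ J ⊔ Ideal.span ({f} : Set A) = ⊤) →
    Ideal.span ({u - 1} : Set A) ⊔ Ideal.span ({f} : Set A) = ⊤ →
    -- the conclusions about `A_K = K ⊗[R] A` as a `K[X]`-module via `X ↦ 1 ⊗ u`:
    (letI : Algebra (Polynomial K) (TensorProduct R K A) :=
      (Polynomial.aeval ((1 : K) ⊗ₜ[R] u) :
        Polynomial K →ₐ[K] TensorProduct R K A).toRingHom.toAlgebra;
      Module.Finite (Polynomial K) (TensorProduct R K A) ∧
      Module.Free (Polynomial K) (TensorProduct R K A) ∧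
      Polynomial.eval (0 : K)
        (LinearMap.det (LinearMap.mulLeft (Polynomial K) ((1 : K) ⊗ₜ[R] f))) ≠ 0 ∧
      Polynomial.eval (1 : K)
        (LinearMap.det (LinearMap.mulLeft (Polynomial K) ((1 : K) ⊗ₜ[R] f))) ≠ 0) :=
  norm_does_not_vanish_at_zero_and_one_general R K A ε f hf u
end

section
/- Let R be a commutative ring and F a covariant functor from the category of commutative R-algebras to the category of abelian groups. Let S′ and R′ be R-algebras which are noetherian domains, with fields of fractions K′ and L′ respectively. Let i : S′ → R′ be an injective flat homomorphism of R-algebras of finite type, and let j : K′ → L′ be the induced inclusion of fraction fields. Then for every localization R′′ of R′ (i.e. R′′ = M^{-1}R′ for a multiplicative subset M ⊆ R′ ∖ {0}), the induced map j_* : F(K′) → F(L′) carries S′-unramified elements to R′′-unramified elements; that is, j_*(F_{nr,S′}(K′)) ⊆ F_{nr,R′′}(L′). -/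
open CategoryTheory

universe u

/-- A covariant functor from the category of commutative `R`-algebras to abelian groups. -/
structure AbGroupFunctor (R : Type u) [CommRing R] : Type (u + 1) where
  obj : (T : Type u) → [CommRing T] → [Algebra R T] → AddCommGrpCat.{u}
  map : {T T' : Type u} → [CommRing T] → [Algebra R T] → [CommRing T'] → [Algebra R T'] →
    (T →ₐ[R] T') → (obj T ⟶ obj T')
  map_id : ∀ (T : Type u) [CommRing T] [Algebra R T], map (AlgHom.id R T) = 𝟙 (obj T)
  map_comp : ∀ {T T' T'' : Type u} [CommRing T] [Algebra R T] [CommRing T'] [Algebra R T']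
    [CommRing T''] [Algebra R T''] (φ : T →ₐ[R] T') (ψ : T' →ₐ[R] T''),
    map (ψ.comp φ) = map φ ≫ map ψ

/-- The canonical `R`-algebra homomorphism from the localization of a domain `T` at a prime `p`
to the fraction field `Q` of `T`. -/
noncomputable def locAtPrimeToFractionField (R : Type u) [CommRing R]
    (T : Type u) [CommRing T] [IsDomain T] [Algebra R T]
    (Q : Type u) [Field Q] [Algebra T Q] [IsFractionRing T Q]
    [Algebra R Q] [IsScalarTower R T Q]
    (p : Ideal T) [p.IsPrime] : Localization.AtPrime p →ₐ[R] Q :=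
  IsLocalization.liftAlgHom (M := p.primeCompl) (S := Localization.AtPrime p)
    (f := IsScalarTower.toAlgHom R T Q)
    (fun y => by
      refine isUnit_iff_ne_zero.mpr fun h => y.2 ?_
      have h0 : (y : T) = 0 :=
        (IsFractionRing.to_map_eq_zero_iff (K := Q)).mp (by simpa using h)
      rw [h0]; exact p.zero_mem)

/-- The subgroup (here: subset) of `T`-unramified elements of `F(Q)`, where `Q` is the fraction
field of the noetherian domain `T`: the intersection, over all primes `p` of `T` of height one,
of the images of `F(T_p) → F(Q)`. -/
noncomputable def unramifiedSet (R : Type u) [CommRing R] (F : AbGroupFunctor R)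
    (T : Type u) [CommRing T] [IsDomain T] [Algebra R T]
    (Q : Type u) [Field Q] [Algebra T Q] [IsFractionRing T Q]
    [Algebra R Q] [IsScalarTower R T Q] : Set (F.obj Q) :=
  ⋂ (p : Ideal T) (hp : p.IsPrime),
    haveI : p.IsPrime := hp
    ⋂ (_ : ringKrullDim (Localization.AtPrime p) = 1),
      Set.range (F.map (locAtPrimeToFractionField R T Q p))

/-!
Let `q` be a height-one prime of `R''` and `p` its contraction to `S'`. The composite
`S' → R' → R''` is flat, so going-down gives `ht p ≤ ht q = 1`. If `ht p = 1`, an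
`S'`-unramified `x` comes from `F(S'_p)`; if `p = 0`, then `S'_p → K'` is an isomorphism, so
every `x` does. Either way `j_* x` comes from `F(R''_q)` through the induced map `S'_p → R''_q`.
-/

lemma Ideal.height_under_le_height {A B : Type*} [CommRing A] [CommRing B] [Algebra A B]
    [Algebra.HasGoingDown A B] (P : Ideal B) [P.IsPrime] : (P.under A).height ≤ P.height := by
  change (⟨P.under A, inferInstance⟩ : PrimeSpectrum A).asIdeal.height ≤
    (⟨P, inferInstance⟩ : PrimeSpectrum B).asIdeal.height
  rw [PrimeSpectrum.height_eq_orderHeight, PrimeSpectrum.height_eq_orderHeight]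
  refine Order.height_le fun l hl => ?_
  have : P.LiesOver l.last.asIdeal := ⟨by rw [hl]⟩
  obtain ⟨L, hlen, hlast, -⟩ := Ideal.exists_ltSeries_of_hasGoingDown l P
  exact hlen ▸ Order.length_le_height hlast.le

lemma RingHom.Flat.height_comap_le {A B : Type*} [CommRing A] [CommRing B] {f : A →+* B}
    (hf : f.Flat) (P : Ideal B) [P.IsPrime] : (P.comap f).height ≤ P.height := by
  algebraize [f]
  exact P.height_under_le_height

namespace AbGroupFunctor

variable {R : Type u} [CommRing R] (F : AbGroupFunctor R)
  {A B C D : Type u} [CommRing A] [Algebra R A] [CommRing B] [Algebra R B]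
  [CommRing C] [Algebra R C] [CommRing D] [Algebra R D]

lemma map_comp_apply (φ : A →ₐ[R] B) (ψ : B →ₐ[R] C) (x : F.obj A) :
    F.map (ψ.comp φ) x = F.map ψ (F.map φ x) := by
  rw [F.map_comp]
  rfl

lemma map_surjective_of_bijective {f : A →ₐ[R] B} (hf : Function.Bijective f) :
    Function.Surjective (F.map f) := by
  intro y
  refine ⟨F.map (AlgEquiv.ofBijective f hf).symm y, ?_⟩
  have hcomp : f.comp ((AlgEquiv.ofBijective f hf).symm : B →ₐ[R] A) = AlgHom.id R B :=
    AlgHom.ext fun b => (AlgEquiv.ofBijective f hf).apply_symm_apply b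
  rw [← map_comp_apply, hcomp, F.map_id]
  rfl

lemma map_mem_range_of_comp_eq {f : A →ₐ[R] B} {g : C →ₐ[R] D} {j : B →ₐ[R] D}
    (φ : A →ₐ[R] C) (h : g.comp φ = j.comp f) (y : F.obj A) :
    F.map j (F.map f y) ∈ Set.range (F.map g) :=
  ⟨F.map φ y, by rw [← map_comp_apply, h, map_comp_apply]⟩

end AbGroupFunctor

section locAtPrimeToFractionField

variable (R : Type u) [CommRing R] {T : Type u} [CommRing T] [IsDomain T] [Algebra R T]
  (Q : Type u) [Field Q] [Algebra T Q] [IsFractionRing T Q] [Algebra R Q] [IsScalarTower R T Q]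

@[simp]
lemma locAtPrimeToFractionField_algebraMap (p : Ideal T) [p.IsPrime] (t : T) :
    locAtPrimeToFractionField R T Q p (algebraMap T (Localization.AtPrime p) t) =
      algebraMap T Q t :=
  IsLocalization.lift_eq _ t

lemma locAtPrimeToFractionField_bijective_of_eq_bot (p : Ideal T) [p.IsPrime] (hp : p = ⊥) :
    Function.Bijective (locAtPrimeToFractionField R T Q p) := by
  subst hp
  have : IsFractionRing T (Localization.AtPrime (⊥ : Ideal T)) := by
    simpa [Ideal.primeCompl_bot] using Localization.isLocalization (M := (⊥ : Ideal T).primeCompl)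
  let e := IsLocalization.algEquiv (nonZeroDivisors T) (Localization.AtPrime (⊥ : Ideal T)) Q
  have hext : (locAtPrimeToFractionField R T Q ⊥ : Localization.AtPrime (⊥ : Ideal T) →+* Q) =
      (e : Localization.AtPrime (⊥ : Ideal T) →+* Q) :=
    IsLocalization.ringHom_ext (nonZeroDivisors T) (RingHom.ext fun t => by simp [e])
  rw [← AlgHom.coe_toRingHom, hext]
  exact e.bijective

lemma locAtPrimeToFractionField_comp_localAlgHom {T' : Type u} [CommRing T'] [IsDomain T']
    [Algebra R T'] (Q' : Type u) [Field Q'] [Algebra T' Q'] [IsFractionRing T' Q'] [Algebra R Q']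
    [IsScalarTower R T' Q'] (g : T →ₐ[R] T') (j : Q →ₐ[R] Q')
    (hj : ∀ t : T, j (algebraMap T Q t) = algebraMap T' Q' (g t)) (q : Ideal T') [q.IsPrime] :
    (locAtPrimeToFractionField R T' Q' q).comp (Localization.localAlgHom (q.comap g) q g rfl) =
      j.comp (locAtPrimeToFractionField R T Q (q.comap g)) :=
  AlgHom.coe_ringHom_injective <| IsLocalization.ringHom_ext (q.comap g).primeCompl <|
    RingHom.ext fun t => by simp [Localization.localRingHom_to_map, hj]

end locAtPrimeToFractionField

theorem unramified_maps_to_unramified_general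
    (R : Type u) [CommRing R] (F : AbGroupFunctor R)
    (S' : Type u) [CommRing S'] [IsDomain S'] [Algebra R S']
    (R' : Type u) [CommRing R'] [Algebra R R']
    (K' : Type u) [Field K'] [Algebra S' K'] [IsFractionRing S' K']
    [Algebra R K'] [IsScalarTower R S' K']
    (L' : Type u) [Field L'] [Algebra R' L'] [Algebra R L']
    (i : S' →ₐ[R] R') (hflat : RingHom.Flat (i : S' →+* R'))
    (j : K' →ₐ[R] L') (hj : ∀ s : S', j (algebraMap S' K' s) = algebraMap R' L' (i s))
    (M : Submonoid R')
    (R'' : Type u) [CommRing R''] [IsDomain R''] [Algebra R' R''] [IsLocalization M R'']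
    [Algebra R R''] [IsScalarTower R R' R'']
    [Algebra R'' L'] [IsScalarTower R' R'' L'] [IsScalarTower R R'' L'] [IsFractionRing R'' L'] :
    (F.map j) '' (unramifiedSet R F S' K') ⊆ unramifiedSet R F R'' L' := by
  rintro _ ⟨x, hx, rfl⟩
  simp only [unramifiedSet, Set.mem_iInter] at hx ⊢
  intro q _ hq
  let g : S' →ₐ[R] R'' := (IsScalarTower.toAlgHom R R' R'').comp i
  have hg : (g : S' →+* R'').Flat :=
    hflat.comp (RingHom.flat_algebraMap_iff.mpr (IsLocalization.flat R'' M))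
  rw [IsLocalization.AtPrime.ringKrullDim_eq_height q] at hq
  have hheight : (q.comap g).height ≤ 1 := (hg.height_comap_le q).trans (by exact_mod_cast hq.le)
  have hx' : x ∈ Set.range (F.map (locAtPrimeToFractionField R S' K' (q.comap g))) := by
    rcases Order.le_one_iff.mp hheight with h0 | h1
    · exact F.map_surjective_of_bijective (locAtPrimeToFractionField_bijective_of_eq_bot R K' _
        (Ideal.height_eq_zero_iff_eq_bot.mp h0)) x
    · refine hx _ inferInstance ?_
      rw [IsLocalization.AtPrime.ringKrullDim_eq_height (q.comap g), h1]
      rfl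
  obtain ⟨y, rfl⟩ := hx'
  refine F.map_mem_range_of_comp_eq (Localization.localAlgHom _ q g rfl)
    (locAtPrimeToFractionField_comp_localAlgHom R K' L' g j
      (fun s => (hj s).trans (IsScalarTower.algebraMap_apply R' R'' L' (i s))) q) y

/-- Let `R` be a commutative ring and `F` a covariant functor from commutative
`R`-algebras to abelian groups. Let `S′` and `R′` be `R`-algebras which are noetherian domains
with fraction fields `K′` and `L′`. Let `i : S′ → R′` be an injective flat homomorphism of
`R`-algebras of finite type, and `j : K′ → L′` the induced inclusion of fraction fields. Then
for every localization `R′′` of `R′` at a multiplicative set `M ⊆ R′ ∖ {0}`, the induced map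
`j_* : F(K′) → F(L′)` carries `S′`-unramified elements to `R′′`-unramified elements. -/
theorem unramified_maps_to_unramified
    (R : Type u) [CommRing R] (F : AbGroupFunctor R)
    (S' : Type u) [CommRing S'] [IsDomain S'] [IsNoetherianRing S'] [Algebra R S']
    (R' : Type u) [CommRing R'] [IsDomain R'] [IsNoetherianRing R'] [Algebra R R']
    (K' : Type u) [Field K'] [Algebra S' K'] [IsFractionRing S' K']
    [Algebra R K'] [IsScalarTower R S' K']
    (L' : Type u) [Field L'] [Algebra R' L'] [IsFractionRing R' L']
    [Algebra R L'] [IsScalarTower R R' L']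
    (i : S' →ₐ[R] R') (hinj : Function.Injective i)
    (hflat : RingHom.Flat (i : S' →+* R')) (hft : (i : S' →+* R').FiniteType)
    (j : K' →ₐ[R] L') (hj : ∀ s : S', j (algebraMap S' K' s) = algebraMap R' L' (i s))
    (M : Submonoid R') (hM : (0 : R') ∉ M)
    (R'' : Type u) [CommRing R''] [IsDomain R''] [Algebra R' R''] [IsLocalization M R'']
    [Algebra R R''] [IsScalarTower R R' R'']
    [Algebra R'' L'] [IsScalarTower R' R'' L'] [IsScalarTower R R'' L'] [IsFractionRing R'' L'] :
    (F.map j) '' (unramifiedSet R F S' K') ⊆ unramifiedSet R F R'' L' :=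
  unramified_maps_to_unramified_general R F S' R' K' L' i hflat j hj M R''
end
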